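/- Let d ≥ 1 and let α, β, γ be real numbers with α + 2β > d, α + 2γ > d, α < d, 2β < d, and 2γ < d. Then there exists a constant C such that for all a, b ∈ ℝ^d, ∑_{n ∈ ℤ^d} ⟨n⟩^{−α} ⟨n + a⟩^{−β} ⟨n + b⟩^{−γ} ≤ C ⟨a⟩^{d/2 − α/2 − β} ⟨b⟩^{d/2 − α/2 − γ}. -/

import Mathlib

/-- Japanese bracket of a lattice point. -/
noncomputable def jbZ {d : ℕ} (n : Fin d → ℤ) : ℝ :=
  Real.sqrt (1 + ∑ i, ((n i : ℝ)) ^ 2)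

/-- Japanese bracket of a point of ℝ^d. -/
noncomputable def jbR {d : ℕ} (a : Fin d → ℝ) : ℝ :=
  Real.sqrt (1 + ∑ i, (a i) ^ 2)

/-!
Writing `⟨n⟩^(-α) = ⟨n⟩^(-α/2) ⟨n⟩^(-α/2)`, the Cauchy–Schwarz inequality reduces the claim to the
two-factor bound `∑ₙ ⟨n⟩^(-α) ⟨n + a⟩^(-β) ≲ ⟨a⟩^(d - α - β)` for `α, β < d < α + β`. Since
`⟨a⟩ ≤ 2 max(⟨n⟩, ⟨n + a⟩)`, on the terms with `⟨n⟩ ≤ ⟨n + a⟩` the second factor is at most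
`(⟨a⟩/2)^(-β)` if `⟨n⟩ ≤ ⟨a⟩` and at most `⟨n⟩^(-β)` otherwise. This leaves the one-weight sums
`∑_{⟨n⟩ ≤ A} ⟨n⟩^(-α) ≲ A^(d - α)` and `∑_{⟨n⟩ ≥ A} ⟨n⟩^(-α-β) ≲ A^(d - α - β)`, which follow by a
dyadic decomposition from the count `#{n : ⟨n + a⟩ ≤ T} ≤ (3T)^d`, uniform in the shift `a`.
-/

open scoped ENNReal
open Set MeasureTheory

theorem tsum_le_of_tsum_ofReal_le {ι : Type*} {f : ι → ℝ} {c : ℝ} (hf : ∀ i, 0 ≤ f i)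
    (hc : 0 ≤ c) (h : ∑' i, ENNReal.ofReal (f i) ≤ ENNReal.ofReal c) : ∑' i, f i ≤ c := by
  calc ∑' i, f i = (∑' i, ENNReal.ofReal (f i)).toReal := by
        rw [ENNReal.tsum_toReal_eq fun _ => ENNReal.ofReal_ne_top]
        simp [hf]
    _ ≤ c := ENNReal.toReal_le_of_le_ofReal hc h

theorem ENNReal.tsum_mul_le_of_tsum_sq_le {ι : Type*} {f g : ι → ℝ≥0∞} {x y : ℝ≥0∞}
    (hf : ∑' i, f i ^ 2 ≤ x ^ 2) (hg : ∑' i, g i ^ 2 ≤ y ^ 2) :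
    ∑' i, f i * g i ≤ x * y := by
  let _ : MeasurableSpace ι := ⊤
  have hcs := ENNReal.lintegral_mul_le_Lp_mul_Lq (Measure.count : Measure ι)
    Real.HolderConjugate.two_two (Measurable.of_discrete (f := f)).aemeasurable
    (Measurable.of_discrete (f := g)).aemeasurable
  have hsqrt {z w : ℝ≥0∞} (h : z ≤ w ^ 2) : z ^ (1 / 2 : ℝ) ≤ w := by
    calc z ^ (1 / 2 : ℝ) ≤ (w ^ 2) ^ (1 / 2 : ℝ) := ENNReal.rpow_le_rpow h (by norm_num)
      _ = w := by rw [one_div]; exact_mod_cast ENNReal.pow_rpow_inv_natCast two_ne_zero w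
  simp only [lintegral_count, Pi.mul_apply, ENNReal.rpow_two] at hcs
  exact hcs.trans (mul_le_mul' (hsqrt hf) (hsqrt hg))

section CountingBound

variable {ι : Type*}

def CountingBound (w : ι → ℝ) (K D : ℝ) : Prop :=
  ∀ T > 0, ({i | w i ≤ T}.encard : ℝ≥0∞) ≤ ENNReal.ofReal (K * T ^ D)

theorem ENNReal.tsum_indicator_le_of_subset_iUnion {S : Set ι} {s : ℕ → Set ι}
    (hS : S ⊆ ⋃ k, s k) (f : ι → ℝ≥0∞) :
    ∑' i, S.indicator f i ≤ ∑' k, ∑' i, (s k).indicator f i := by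
  calc ∑' i, S.indicator f i ≤ ∑' i, ∑' k, (s k).indicator f i := by
        refine ENNReal.tsum_le_tsum fun i => indicator_apply_le' (fun hi => ?_) fun _ => zero_le
        obtain ⟨k, hk⟩ := mem_iUnion.1 (hS hi)
        exact (indicator_of_mem hk f).symm.trans_le (ENNReal.le_tsum k)
    _ = ∑' k, ∑' i, (s k).indicator f i := ENNReal.tsum_comm

variable {w : ι → ℝ} {K D σ : ℝ}

theorem CountingBound.tsum_indicator_rpow_le (hw : CountingBound w K D) (hσ : 0 ≤ σ) {r : ℝ}
    (hr : 0 < r) :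
    ∑' i, {i | r ≤ w i ∧ w i ≤ 2 * r}.indicator (fun i => ENNReal.ofReal (w i ^ (-σ))) i
      ≤ ENNReal.ofReal (K * 2 ^ D * r ^ (D - σ)) := by
  set S := {i | r ≤ w i ∧ w i ≤ 2 * r}
  calc ∑' i, S.indicator (fun i => ENNReal.ofReal (w i ^ (-σ))) i
      ≤ ∑' i, S.indicator (fun _ => ENNReal.ofReal (r ^ (-σ))) i :=
        ENNReal.tsum_le_tsum fun i => indicator_le_indicator' fun hi =>
          ENNReal.ofReal_le_ofReal (Real.rpow_le_rpow_of_nonpos hr hi.1 (neg_nonpos.2 hσ))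
    _ = ENNReal.ofReal (r ^ (-σ)) * S.encard := by
        rw [← tsum_subtype, ENNReal.tsum_set_const, mul_comm]
    _ ≤ ENNReal.ofReal (r ^ (-σ)) * ENNReal.ofReal (K * (2 * r) ^ D) := by
        gcongr
        have hsub : S ⊆ {i | w i ≤ 2 * r} := fun i hi => hi.2
        exact le_trans (by exact_mod_cast encard_le_encard hsub) (hw _ (by positivity))
    _ = ENNReal.ofReal (K * 2 ^ D * r ^ (D - σ)) := by
        rw [← ENNReal.ofReal_mul (by positivity), Real.mul_rpow zero_le_two hr.le,
          Real.rpow_sub hr, Real.rpow_neg hr.le, div_eq_mul_inv]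
        ring_nf

theorem CountingBound.tsum_indicator_rpow_le_of_subset_iUnion (hw : CountingBound w K D)
    (hσ : 0 ≤ σ) {x c : ℝ} (hx : 0 < x) (hc : 0 < c) (hq : c ^ (D - σ) < 1) {S : Set ι}
    (hS : S ⊆ ⋃ k : ℕ, {i | x * c ^ k ≤ w i ∧ w i ≤ 2 * (x * c ^ k)}) :
    ∑' i, S.indicator (fun i => ENNReal.ofReal (w i ^ (-σ))) i
      ≤ ENNReal.ofReal (K * 2 ^ D * x ^ (D - σ) / (1 - c ^ (D - σ))) := by
  have hq0 : 0 ≤ c ^ (D - σ) := by positivity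
  calc ∑' i, S.indicator (fun i => ENNReal.ofReal (w i ^ (-σ))) i
      ≤ ∑' k : ℕ, ∑' i, {i | x * c ^ k ≤ w i ∧ w i ≤ 2 * (x * c ^ k)}.indicator
          (fun i => ENNReal.ofReal (w i ^ (-σ))) i :=
        ENNReal.tsum_indicator_le_of_subset_iUnion hS _
    _ ≤ ∑' k : ℕ, ENNReal.ofReal (c ^ (D - σ)) ^ k * ENNReal.ofReal (K * 2 ^ D * x ^ (D - σ)) := by
        refine ENNReal.tsum_le_tsum fun k =>
          (hw.tsum_indicator_rpow_le hσ (by positivity)).trans_eq ?_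
        rw [← ENNReal.ofReal_pow hq0, ← ENNReal.ofReal_mul (by positivity),
          Real.mul_rpow hx.le (by positivity), ← Real.rpow_pow_comm hc.le]
        ring_nf
    _ = ENNReal.ofReal (K * 2 ^ D * x ^ (D - σ) / (1 - c ^ (D - σ))) := by
        rw [ENNReal.tsum_mul_right, ENNReal.tsum_geometric, ← ENNReal.ofReal_one,
          ← ENNReal.ofReal_sub _ hq0, ← ENNReal.ofReal_inv_of_pos (by linarith),
          ← ENNReal.ofReal_mul (by simp [hq.le]), div_eq_inv_mul]

theorem exists_tsum_indicator_rpow_le_of_lt (hK : 0 < K) (hσ : 0 ≤ σ) (hσD : σ < D) :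
    ∃ C > 0, ∀ w : ι → ℝ, (∀ i, 0 < w i) → CountingBound w K D → ∀ M > 0,
      ∑' i, {i | w i ≤ M}.indicator (fun i => ENNReal.ofReal (w i ^ (-σ))) i
        ≤ ENNReal.ofReal (C * M ^ (D - σ)) := by
  have hq : (2⁻¹ : ℝ) ^ (D - σ) < 1 := Real.rpow_lt_one (by norm_num) (by norm_num) (by linarith)
  refine ⟨K * 2 ^ D * 2⁻¹ ^ (D - σ) / (1 - 2⁻¹ ^ (D - σ)), div_pos (by positivity) (by linarith),
    fun w hw0 hw M hM => ?_⟩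
  have hS : {i | w i ≤ M} ⊆
      ⋃ k : ℕ, {i | M * 2⁻¹ * 2⁻¹ ^ k ≤ w i ∧ w i ≤ 2 * (M * 2⁻¹ * 2⁻¹ ^ k)} := by
    intro i hi
    obtain ⟨k, hk, hk'⟩ := exists_nat_pow_near ((one_le_div (hw0 i)).2 hi) one_lt_two
    rw [le_div_iff₀ (hw0 i)] at hk
    rw [div_lt_iff₀ (hw0 i)] at hk'
    have hpow : M * 2⁻¹ * 2⁻¹ ^ k = M / 2 ^ (k + 1) := by rw [pow_succ, inv_pow]; field_simp
    refine mem_iUnion.2 ⟨k, ?_, ?_⟩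
    · rw [hpow, div_le_iff₀ (by positivity)]; linarith
    · rw [hpow, mul_div_assoc', le_div_iff₀ (by positivity), pow_succ]; linarith
  refine (hw.tsum_indicator_rpow_le_of_subset_iUnion hσ (by positivity) (by norm_num) hq
    hS).trans_eq ?_
  rw [Real.mul_rpow hM.le (by norm_num)]
  ring_nf

theorem exists_tsum_indicator_rpow_le_of_gt (hK : 0 < K) (hσ : 0 ≤ σ) (hDσ : D < σ) :
    ∃ C > 0, ∀ w : ι → ℝ, CountingBound w K D → ∀ R > 0,
      ∑' i, {i | R ≤ w i}.indicator (fun i => ENNReal.ofReal (w i ^ (-σ))) i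
        ≤ ENNReal.ofReal (C * R ^ (D - σ)) := by
  have hq : (2 : ℝ) ^ (D - σ) < 1 := Real.rpow_lt_one_of_one_lt_of_neg one_lt_two (by linarith)
  refine ⟨K * 2 ^ D / (1 - 2 ^ (D - σ)), div_pos (by positivity) (by linarith),
    fun w hw R hR => ?_⟩
  have hS : {i | R ≤ w i} ⊆ ⋃ k : ℕ, {i | R * 2 ^ k ≤ w i ∧ w i ≤ 2 * (R * 2 ^ k)} := by
    intro i hi
    obtain ⟨k, hk, hk'⟩ := exists_nat_pow_near ((one_le_div hR).2 hi) one_lt_two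
    rw [le_div_iff₀ hR] at hk
    rw [div_lt_iff₀ hR] at hk'
    exact mem_iUnion.2 ⟨k, by linarith, by rw [pow_succ] at hk'; linarith⟩
  refine (hw.tsum_indicator_rpow_le_of_subset_iUnion hσ hR two_pos hq hS).trans_eq ?_
  ring_nf

variable {α β : ℝ}

theorem exists_tsum_indicator_rpow_mul_rpow_le (hK : 0 < K) (hα : 0 ≤ α) (hαD : α < D)
    (hβ : 0 ≤ β) (hαβ : D < α + β) :
    ∃ C > 0, ∀ (u v : ι → ℝ) (A : ℝ), (∀ i, 0 < u i) → CountingBound u K D → 0 < A →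
      (∀ i, u i ≤ v i → A ≤ 2 * v i) →
      ∑' i, {i | u i ≤ v i}.indicator (fun i => ENNReal.ofReal (u i ^ (-α) * v i ^ (-β))) i
        ≤ ENNReal.ofReal (C * A ^ (D - α - β)) := by
  obtain ⟨C₁, hC₁, hregion⟩ := exists_tsum_indicator_rpow_le_of_lt (ι := ι) hK hα hαD
  obtain ⟨C₂, hC₂, htail⟩ := exists_tsum_indicator_rpow_le_of_gt (ι := ι) hK (by linarith) hαβ
  refine ⟨2 ^ β * C₁ + C₂, by positivity, fun u v A hu0 hu hA huv => ?_⟩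
  have hsplit : ∀ i, {i | u i ≤ v i}.indicator (fun i => ENNReal.ofReal (u i ^ (-α) * v i ^ (-β))) i
      ≤ ENNReal.ofReal ((A / 2) ^ (-β)) *
          {i | u i ≤ A}.indicator (fun i => ENNReal.ofReal (u i ^ (-α))) i
        + {i | A ≤ u i}.indicator (fun i => ENNReal.ofReal (u i ^ (-(α + β)))) i := by
    intro i
    refine indicator_apply_le' (fun (hi : u i ≤ v i) => ?_) fun _ => zero_le
    have hui := hu0 i
    rcases le_total (u i) A with hiA | hAi
    · rw [indicator_of_mem (show i ∈ {i | u i ≤ A} from hiA), ← ENNReal.ofReal_mul (by positivity)]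
      refine le_add_right (ENNReal.ofReal_le_ofReal ?_)
      rw [mul_comm ((A / 2) ^ (-β))]
      exact mul_le_mul_of_nonneg_left (Real.rpow_le_rpow_of_nonpos (by positivity)
        (by linarith [huv i hi]) (neg_nonpos.2 hβ)) (by positivity)
    · rw [indicator_of_mem (show i ∈ {i | A ≤ u i} from hAi), neg_add, Real.rpow_add hui]
      refine le_add_left (ENNReal.ofReal_le_ofReal ?_)
      exact mul_le_mul_of_nonneg_left (Real.rpow_le_rpow_of_nonpos hui hi (neg_nonpos.2 hβ))
        (by positivity)
  calc _ ≤ _ := ENNReal.tsum_le_tsum hsplit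
    _ = ENNReal.ofReal ((A / 2) ^ (-β)) *
          ∑' i, {i | u i ≤ A}.indicator (fun i => ENNReal.ofReal (u i ^ (-α))) i
        + ∑' i, {i | A ≤ u i}.indicator (fun i => ENNReal.ofReal (u i ^ (-(α + β)))) i := by
        rw [ENNReal.tsum_add, ENNReal.tsum_mul_left]
    _ ≤ ENNReal.ofReal ((A / 2) ^ (-β)) * ENNReal.ofReal (C₁ * A ^ (D - α))
        + ENNReal.ofReal (C₂ * A ^ (D - (α + β))) := by
        gcongr
        exacts [hregion u hu0 hu A hA, htail u hu A hA]
    _ = ENNReal.ofReal ((2 ^ β * C₁ + C₂) * A ^ (D - α - β)) := by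
        rw [← ENNReal.ofReal_mul (by positivity),
          ← ENNReal.ofReal_add (by positivity) (by positivity)]
        congr 1
        simp only [Real.div_rpow hA.le zero_le_two, Real.rpow_neg zero_le_two, Real.rpow_neg hA.le,
          Real.rpow_sub hA, Real.rpow_add hA]
        field_simp

theorem exists_tsum_rpow_mul_rpow_le (hK : 0 < K) (hαD : α < D) (hβD : β < D)
    (hαβ : D < α + β) :
    ∃ C > 0, ∀ (u v : ι → ℝ) (A : ℝ), (∀ i, 0 < u i) → (∀ i, 0 < v i) →
      CountingBound u K D → CountingBound v K D → 0 < A → (∀ i, A ≤ 2 * max (u i) (v i)) →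
      ∑' i, ENNReal.ofReal (u i ^ (-α) * v i ^ (-β)) ≤ ENNReal.ofReal (C * A ^ (D - α - β)) := by
  obtain ⟨C₁, hC₁, huv⟩ :=
    exists_tsum_indicator_rpow_mul_rpow_le (ι := ι) hK (by linarith) hαD (by linarith) hαβ
  obtain ⟨C₂, hC₂, hvu⟩ :=
    exists_tsum_indicator_rpow_mul_rpow_le (ι := ι) hK (by linarith) hβD (by linarith)
      (by linarith : D < β + α)
  refine ⟨C₁ + C₂, by positivity, fun u v A hu0 hv0 hu hv hA hmax => ?_⟩
  set f := fun i => ENNReal.ofReal (u i ^ (-α) * v i ^ (-β))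
  have hsplit : ∀ i, f i ≤ {i | u i ≤ v i}.indicator f i + {i | v i ≤ u i}.indicator f i := by
    intro i
    rcases le_total (u i) (v i) with h | h
    · exact (indicator_of_mem (show i ∈ {i | u i ≤ v i} from h) f).ge.trans le_self_add
    · exact (indicator_of_mem (show i ∈ {i | v i ≤ u i} from h) f).ge.trans le_add_self
  have hf : f = fun i => ENNReal.ofReal (v i ^ (-β) * u i ^ (-α)) := by
    simp only [f, mul_comm]
  calc ∑' i, f i ≤ _ := ENNReal.tsum_le_tsum hsplit
    _ = ∑' i, {i | u i ≤ v i}.indicator f i + ∑' i, {i | v i ≤ u i}.indicator f i :=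
        ENNReal.tsum_add
    _ ≤ ENNReal.ofReal (C₁ * A ^ (D - α - β)) + ENNReal.ofReal (C₂ * A ^ (D - β - α)) := by
        gcongr
        · exact huv u v A hu0 hu hA fun i h => (max_eq_right h) ▸ hmax i
        · rw [hf]
          exact hvu v u A hv0 hv hA fun i h => (max_eq_left h) ▸ hmax i
    _ = ENNReal.ofReal ((C₁ + C₂) * A ^ (D - α - β)) := by
        rw [← ENNReal.ofReal_add (by positivity) (by positivity), sub_right_comm D β, add_mul]

end CountingBound

section JapaneseBracket

variable {d : ℕ}

theorem sq_jbR (x : Fin d → ℝ) : jbR x ^ 2 = 1 + ∑ i, x i ^ 2 :=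
  Real.sq_sqrt (by positivity)

theorem one_le_jbR (x : Fin d → ℝ) : 1 ≤ jbR x :=
  Real.one_le_sqrt.2 (le_add_of_nonneg_right (by positivity))

theorem jbR_pos (x : Fin d → ℝ) : 0 < jbR x :=
  one_pos.trans_le (one_le_jbR x)

theorem jbZ_pos (n : Fin d → ℤ) : 0 < jbZ n :=
  jbR_pos _

theorem abs_le_jbR (x : Fin d → ℝ) (i : Fin d) : |x i| ≤ jbR x := by
  rw [← Real.sqrt_sq_eq_abs]
  refine Real.sqrt_le_sqrt ?_
  have := Finset.single_le_sum (fun j _ => sq_nonneg (x j)) (Finset.mem_univ i)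
  linarith

theorem jbR_le_two_mul_max (x a : Fin d → ℝ) : jbR a ≤ 2 * max (jbR x) (jbR (x + a)) := by
  have hsum : ∑ i, a i ^ 2 ≤ 2 * ∑ i, x i ^ 2 + 2 * ∑ i, (x + a) i ^ 2 := by
    rw [Finset.mul_sum, Finset.mul_sum, ← Finset.sum_add_distrib]
    gcongr with i
    simp only [Pi.add_apply]
    nlinarith [sq_nonneg (2 * x i + a i)]
  have hx := sq_jbR x
  have hxa := sq_jbR (x + a)
  have hmx := pow_le_pow_left₀ (jbR_pos x).le (le_max_left (jbR x) (jbR (x + a))) 2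
  have hmxa := pow_le_pow_left₀ (jbR_pos (x + a)).le (le_max_right (jbR x) (jbR (x + a))) 2
  rw [jbR, Real.sqrt_le_left (mul_nonneg zero_le_two ((jbR_pos x).le.trans (le_max_left _ _)))]
  nlinarith

theorem card_Icc_ceil_floor_le {x y : ℝ} (h : x ≤ y + 1) :
    ((Finset.Icc ⌈x⌉ ⌊y⌋).card : ℝ) ≤ y - x + 1 := by
  have hy := Int.floor_le y
  have hx := Int.le_ceil x
  rcases le_or_gt ⌈x⌉ (⌊y⌋ + 1) with hxy | hxy
  · have hcard : ((Finset.Icc ⌈x⌉ ⌊y⌋).card : ℝ) = ⌊y⌋ + 1 - ⌈x⌉ := by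
      exact_mod_cast Int.card_Icc_of_le _ _ hxy
    linarith
  · rw [Finset.Icc_eq_empty (by omega), Finset.card_empty, Nat.cast_zero]
    linarith

theorem countingBound_jbR_add (a : Fin d → ℝ) :
    CountingBound (fun n : Fin d → ℤ => jbR (fun i => (n i : ℝ) + a i)) (3 ^ d) d := by
  intro T hT
  set S := {n : Fin d → ℤ | jbR (fun i => (n i : ℝ) + a i) ≤ T}
  rcases lt_or_ge T 1 with hT1 | hT1
  · have hS : S = ∅ := eq_empty_of_forall_notMem fun n hn =>
      (hT1.trans_le (one_le_jbR _)).not_ge hn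
    simp [hS]
  set box := Fintype.piFinset fun i => Finset.Icc ⌈-a i - T⌉ ⌊T - a i⌋
  have hS : S ⊆ box := fun n hn => Fintype.mem_piFinset.2 fun i => by
    have := abs_le.1 ((abs_le_jbR _ i).trans hn)
    rw [Finset.mem_Icc, Int.ceil_le, Int.le_floor]
    constructor <;> linarith
  have hbox : (box.card : ℝ) ≤ 3 ^ d * T ^ (d : ℝ) := by
    rw [Real.rpow_natCast, ← mul_pow, Fintype.card_piFinset, Nat.cast_prod]
    calc ∏ i, ((Finset.Icc ⌈-a i - T⌉ ⌊T - a i⌋).card : ℝ) ≤ ∏ _i : Fin d, 3 * T :=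
          Finset.prod_le_prod (fun _ _ => by positivity)
            fun i _ => (card_Icc_ceil_floor_le (by linarith)).trans (by linarith)
      _ = (3 * T) ^ d := by simp
  calc (S.encard : ℝ≥0∞) ≤ box.card := by
        exact_mod_cast (encard_le_encard hS).trans_eq (encard_coe_eq_coe_finsetCard box)
    _ ≤ ENNReal.ofReal (3 ^ d * T ^ (d : ℝ)) := by
        rw [← ENNReal.ofReal_natCast]; exact ENNReal.ofReal_le_ofReal hbox

theorem countingBound_jbZ : CountingBound (jbZ (d := d)) (3 ^ d) d := by
  have h := countingBound_jbR_add (0 : Fin d → ℝ)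
  simp only [Pi.zero_apply, add_zero] at h
  exact h

end JapaneseBracket

section Lattice

variable {d : ℕ} {α β : ℝ}

theorem exists_tsum_jbZ_rpow_mul_jbR_rpow_le (hαD : α < d) (hβD : β < d) (hαβ : d < α + β) :
    ∃ C > 0, ∀ a : Fin d → ℝ, ∑' n : Fin d → ℤ,
      ENNReal.ofReal (jbZ n ^ (-α) * jbR (fun i => (n i : ℝ) + a i) ^ (-β))
        ≤ ENNReal.ofReal (C * jbR a ^ ((d : ℝ) - α - β)) := by
  obtain ⟨C, hC, h⟩ := exists_tsum_rpow_mul_rpow_le (ι := Fin d → ℤ) (K := 3 ^ d)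
    (by positivity) hαD hβD hαβ
  exact ⟨C, hC, fun a => h _ _ _ jbZ_pos (fun _ => jbR_pos _) countingBound_jbZ
    (countingBound_jbR_add a) (jbR_pos a) fun n => jbR_le_two_mul_max (fun i => (n i : ℝ)) a⟩

theorem exists_tsum_sq_jbZ_rpow_mul_jbR_rpow_le (hαD : α < d) (hβD : 2 * β < d)
    (hαβ : d < α + 2 * β) :
    ∃ C > 0, ∀ a : Fin d → ℝ, ∑' n : Fin d → ℤ,
      ENNReal.ofReal (jbZ n ^ (-(α / 2)) * jbR (fun i => (n i : ℝ) + a i) ^ (-β)) ^ 2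
        ≤ ENNReal.ofReal (C * jbR a ^ ((d : ℝ) / 2 - α / 2 - β)) ^ 2 := by
  obtain ⟨C, hC, h⟩ := exists_tsum_jbZ_rpow_mul_jbR_rpow_le hαD hβD hαβ
  refine ⟨√C, by positivity, fun a => ?_⟩
  have hsq {x : ℝ} (hx : 0 ≤ x) (p : ℝ) : (x ^ p) ^ 2 = x ^ (2 * p) := by
    rw [← Real.rpow_mul_natCast hx, mul_comm]; norm_num
  have ha := jbR_pos a
  convert h a using 3 with n
  · have hn := jbZ_pos n
    have hna := jbR_pos (fun i => (n i : ℝ) + a i)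
    rw [← ENNReal.ofReal_pow (by positivity), mul_pow, hsq hn.le, hsq hna.le]
    ring_nf
  · rw [← ENNReal.ofReal_pow (by positivity), mul_pow, hsq ha.le, Real.sq_sqrt hC.le]
    ring_nf

end Lattice

theorem sum_two_shift_bracket_general (d : ℕ) (α β γ : ℝ)
    (h1 : α + 2 * β > d) (h2 : α + 2 * γ > d)
    (h3 : α < d) (h4 : 2 * β < d) (h5 : 2 * γ < d) :
    ∃ C > 0, ∀ a b : Fin d → ℝ,
      (∑' n : Fin d → ℤ,
          jbZ n ^ (-α) * jbR (fun i => (n i : ℝ) + a i) ^ (-β)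
            * jbR (fun i => (n i : ℝ) + b i) ^ (-γ))
        ≤ C * jbR a ^ ((d : ℝ) / 2 - α / 2 - β) * jbR b ^ ((d : ℝ) / 2 - α / 2 - γ) := by
  obtain ⟨Cβ, hCβ, hβ⟩ := exists_tsum_sq_jbZ_rpow_mul_jbR_rpow_le h3 h4 h1
  obtain ⟨Cγ, hCγ, hγ⟩ := exists_tsum_sq_jbZ_rpow_mul_jbR_rpow_le h3 h5 h2
  refine ⟨Cβ * Cγ, mul_pos hCβ hCγ, fun a b => ?_⟩
  have ha := jbR_pos a
  have hb := jbR_pos b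
  refine tsum_le_of_tsum_ofReal_le (fun n => ?_) (by positivity) ?_
  · have := jbZ_pos n
    have := jbR_pos (fun i => (n i : ℝ) + a i)
    have := jbR_pos (fun i => (n i : ℝ) + b i)
    positivity
  calc _ = ∑' n : Fin d → ℤ,
          ENNReal.ofReal (jbZ n ^ (-(α / 2)) * jbR (fun i => (n i : ℝ) + a i) ^ (-β))
            * ENNReal.ofReal (jbZ n ^ (-(α / 2)) * jbR (fun i => (n i : ℝ) + b i) ^ (-γ)) := by
        refine tsum_congr fun n => ?_
        have hn := jbZ_pos n
        have := jbR_pos (fun i => (n i : ℝ) + a i)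
        rw [← ENNReal.ofReal_mul (by positivity), show -α = -(α / 2) + -(α / 2) by ring,
          Real.rpow_add hn]
        ring_nf
    _ ≤ ENNReal.ofReal (Cβ * jbR a ^ ((d : ℝ) / 2 - α / 2 - β))
          * ENNReal.ofReal (Cγ * jbR b ^ ((d : ℝ) / 2 - α / 2 - γ)) :=
        ENNReal.tsum_mul_le_of_tsum_sq_le (hβ a) (hγ b)
    _ = _ := by
        rw [← ENNReal.ofReal_mul (by positivity)]
        ring_nf

theorem sum_two_shift_bracket (d : ℕ) (hd : 1 ≤ d) (α β γ : ℝ)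
    (h1 : α + 2 * β > d) (h2 : α + 2 * γ > d)
    (h3 : α < d) (h4 : 2 * β < d) (h5 : 2 * γ < d) :
    ∃ C > 0, ∀ a b : Fin d → ℝ,
      (∑' n : Fin d → ℤ,
          jbZ n ^ (-α) * jbR (fun i => (n i : ℝ) + a i) ^ (-β)
            * jbR (fun i => (n i : ℝ) + b i) ^ (-γ))
        ≤ C * jbR a ^ ((d : ℝ) / 2 - α / 2 - β) * jbR b ^ ((d : ℝ) / 2 - α / 2 - γ) :=
  sum_two_shift_bracket_general d α β γ h1 h2 h3 h4 h5
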